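/- A stream t over {S,P} is infinitarily strongly normalizing (SN∞, i.e., every maximal strongly convergent reduction from t ends in a normal form, equivalently each depth is eventually never rewritten) if and only if each value k ∈ ℤ occurs only finitely often among the sums sum(t,n), n ∈ ℕ; equivalently, iff lim_{n→∞} sum(t,n) exists in {+∞, −∞}. -/
import Mathlib


/-- Infinite terms over the unary signature {S, P}, identified with streams
over {S,P}; `true` represents `S` and `false` represents `P`. -/
def SPStream : Type := ℕ → Bool

/-- A rewrite step at position `i`: the adjacent pair `S P` or `P S` starting
at position `i` is deleted (rules `P (S x) → x` and `S (P x) → x`). -/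
def stepAt (i : ℕ) (t t' : SPStream) : Prop :=
  t i ≠ t (i + 1) ∧ ∀ n, t' n = if n < i then t n else t (n + 2)

/-- A rewrite step (at any position). -/
def stepSP (t t' : SPStream) : Prop := ∃ i, stepAt i t t'

/-- A rewrite step at depth at least `d`. -/
def stepGe (d : ℕ) (t t' : SPStream) : Prop := ∃ i, d ≤ i ∧ stepAt i t t'

/-- `sconvTo t s`: there is a strongly convergent reduction of length `≤ ω`
from `t` to `s`: a sequence of stages `g n`, starting at `t`, where from stage
`n` on all contracted redexes are at depth `≥ n` (so depths tend to infinity),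
and stage `n` already agrees with the limit `s` below depth `n`. -/
def sconvTo (t s : SPStream) : Prop :=
  ∃ g : ℕ → SPStream, g 0 = t ∧
    (∀ n, Relation.ReflTransGen (stepGe n) (g n) (g (n + 1))) ∧
    (∀ n k, k < n → g n k = s k)

/-- `S^ω`, the stream of all `S`'s. -/
def Somega : SPStream := fun _ => true

/-- `P^ω`, the stream of all `P`'s. -/
def Pomega : SPStream := fun _ => false

/-- `psum t n`: number of `S`'s minus number of `P`'s among the
first `n` letters of `t`. -/
def psum (t : SPStream) : ℕ → ℤ
  | 0 => 0
  | n + 1 => psum t n + (if t n then 1 else -1)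


lemma psum_succ (t : SPStream) (n : ℕ) :
    psum t (n+1) = psum t n + (if t n then 1 else -1) := rfl

lemma psum_natAbs_le (t : SPStream) (n : ℕ) : (psum t n).natAbs ≤ n := by
  induction n with
  | zero => simp [psum]
  | succ n ih =>
    rw [psum_succ]
    have := Int.natAbs_add_le (psum t n) (if t n then 1 else -1)
    have h1 : (if t n then (1:ℤ) else -1).natAbs = 1 := by split <;> rfl
    omega

lemma psum_step {i : ℕ} {s s' : SPStream} (h : stepAt i s s') :
    ∀ m, psum s' m = if m ≤ i then psum s m else psum s (m + 2) := by
  obtain ⟨hne, hdef⟩ := h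
  have hlow : ∀ m, m ≤ i → psum s' m = psum s m := by
    intro m hm
    induction m with
    | zero => rfl
    | succ m ih =>
      have hm' : s' m = s m := by rw [hdef m, if_pos (show m < i by omega)]
      rw [psum_succ, psum_succ, ih (by omega), hm']
  have hcancel : psum s (i + 2) = psum s i := by
    rw [psum_succ, psum_succ]
    rcases Bool.eq_false_or_eq_true (s i) with h1 | h1 <;>
      rcases Bool.eq_false_or_eq_true (s (i+1)) with h2 | h2 <;>
      simp_all
  have hhigh : ∀ m, i ≤ m → psum s' m = psum s (m + 2) := by
    intro m hm
    induction m with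
    | zero =>
      have : i = 0 := by omega
      subst this
      rw [hlow 0 (le_refl _), hcancel]
    | succ m ih =>
      rcases Nat.lt_or_ge m i with hmi | hmi
      · have : i = m + 1 := by omega
        subst this
        rw [hlow (m+1) (le_refl _), hcancel]
      · have hm' : s' m = s (m + 2) := by rw [hdef m, if_neg (show ¬ m < i by omega)]
        rw [psum_succ, psum_succ, ih hmi, hm']
  intro m
  split
  · exact hlow m ‹_›
  · exact hhigh m (by omega)

lemma no_freq_decrease (u : ℕ → ℕ) (hle : ∀ n, u (n+1) ≤ u n)
    (hfreq : ∀ N, ∃ n, N ≤ n ∧ u (n+1) < u n) : False := by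
  have hanti : ∀ a b : ℕ, a ≤ b → u b ≤ u a := by
    intro a b hab
    induction b with
    | zero => rw [Nat.le_zero.mp hab]
    | succ b ih =>
      rcases Nat.lt_or_ge a (b+1) with h | h
      · exact le_trans (hle b) (ih (by omega))
      · have : a = b + 1 := by omega
        subst this; exact le_rfl
  have key : ∀ i, ∃ n, u n + i ≤ u 0 := by
    intro i
    induction i with
    | zero => exact ⟨0, by omega⟩
    | succ i ih =>
      obtain ⟨n, hn⟩ := ih
      obtain ⟨m, hm, hlt⟩ := hfreq n
      exact ⟨m + 1, by have := hanti n m hm; omega⟩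
  obtain ⟨n, hn⟩ := key (u 0 + 1)
  omega

open Filter in
lemma fin_to_snInf {t : SPStream} (hfin : ∀ k : ℤ, {n : ℕ | psum t n = k}.Finite) :
    ∀ (ts : ℕ → SPStream) (d : ℕ → ℕ), ts 0 = t →
    (∀ n, stepAt (d n) (ts n) (ts (n + 1))) →
    Tendsto d atTop atTop := by
  intro ts d h0 hstep
  by_contra hnt
  rw [tendsto_atTop_atTop] at hnt
  push_neg at hnt
  obtain ⟨D, hD⟩ := hnt
  -- frequently d n < D
  have hfreqD : ∀ N, ∃ n, N ≤ n ∧ d n < D := by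
    intro N
    obtain ⟨n, hn, hlt⟩ := hD N
    exact ⟨n, hn, by omega⟩
  set M : ℕ := D + 1 with hM
  set A : ℕ → Set ℕ := fun n => {j | (psum (ts n) j).natAbs ≤ M} with hA
  -- A 0 is finite
  have hA0 : (A 0).Finite := by
    have : A 0 ⊆ ⋃ k ∈ Finset.Icc (-(M:ℤ)) (M:ℤ), {n : ℕ | psum t n = k} := by
      intro j hj
      simp only [Set.mem_iUnion, Set.mem_setOf_eq, Finset.mem_Icc]
      refine ⟨psum t j, ⟨?_, ?_⟩, rfl⟩ <;>
      · have : (psum t j).natAbs ≤ M := by simpa [hA, h0] using hj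
        omega
    exact Set.Finite.subset (Set.Finite.biUnion (Finset.finite_toSet _) (fun k _ => hfin k)) this
  -- the injection
  have hrel : ∀ n j, psum (ts (n+1)) j =
      if j ≤ d n then psum (ts n) j else psum (ts n) (j + 2) :=
    fun n => psum_step (hstep n)
  set φ : ℕ → ℕ → ℕ := fun n j => if j ≤ d n then j else j + 2 with hφ
  have hφinj : ∀ n, Function.Injective (φ n) := by
    intro n a b hab
    simp only [hφ] at hab
    split at hab <;> split at hab <;> omega
  have hpre : ∀ n, A (n+1) = (φ n) ⁻¹' (A n) := by
    intro n
    ext j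
    simp only [hA, Set.mem_setOf_eq, Set.mem_preimage, hφ, hrel n j]
    split <;> simp
  have hfinA : ∀ n, (A n).Finite := by
    intro n
    induction n with
    | zero => exact hA0
    | succ n ih => rw [hpre n]; exact Set.Finite.preimage (Function.Injective.injOn (hφinj n)) ih
  have himg : ∀ n, (φ n) '' (A (n+1)) ⊆ A n := by
    intro n
    rw [hpre n]
    exact Set.image_preimage_subset _ _
  have hle : ∀ n, (A (n+1)).ncard ≤ (A n).ncard := by
    intro n
    rw [← Set.ncard_image_of_injective _ (hφinj n)]
    exact Set.ncard_le_ncard (himg n) (hfinA n)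
  have hstrict : ∀ n, d n < D → (A (n+1)).ncard < (A n).ncard := by
    intro n hdn
    rw [← Set.ncard_image_of_injective _ (hφinj n)]
    refine Set.ncard_lt_ncard ?_ (hfinA n)
    refine ⟨himg n, fun hsub => ?_⟩
    have hmem : d n + 1 ∈ A n := by
      simp only [hA, Set.mem_setOf_eq]
      have := psum_natAbs_le (ts n) (d n + 1)
      omega
    obtain ⟨j, _, hj⟩ := hsub hmem
    simp only [hφ] at hj
    split at hj <;> omega
  exact no_freq_decrease (fun n => (A n).ncard) hle
    (fun N => by obtain ⟨n, hn, hlt⟩ := hfreqD N; exact ⟨n, hn, hstrict n hlt⟩)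

lemma psum_cancel {s : SPStream} {j : ℕ} (h : s j ≠ s (j+1)) :
    psum s (j + 2) = psum s j := by
  rw [psum_succ, psum_succ]
  rcases Bool.eq_false_or_eq_true (s j) with h1 | h1 <;>
    rcases Bool.eq_false_or_eq_true (s (j+1)) with h2 | h2 <;>
    simp_all

def del (j : ℕ) (s : SPStream) : SPStream := fun n => if n < j then s n else s (n + 2)

lemma stepAt_del {s : SPStream} {j : ℕ} (h : s j ≠ s (j+1)) :
    stepAt j s (del j s) := ⟨h, fun _ => rfl⟩

lemma psum_del {s : SPStream} {j : ℕ} (h : s j ≠ s (j+1)) (m : ℕ) :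
    psum (del j s) m = if m ≤ j then psum s m else psum s (m + 2) :=
  psum_step (stepAt_del h) m

lemma exists_diff {s : SPStream} {k : ℤ} {a : ℕ}
    (hinf : {n | psum s n = k}.Infinite) :
    ∃ j, a ≤ j ∧ s j ≠ s (j + 1) := by
  by_contra hc
  push_neg at hc
  have hconst : ∀ i, a ≤ i → s i = s a := by
    intro i hi
    induction i with
    | zero => rw [Nat.le_zero.mp hi]
    | succ i ih =>
      rcases Nat.lt_or_ge a (i+1) with h | h
      · rw [← hc i (by omega), ih (by omega)]
      · rw [Nat.le_antisymm hi h]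
  have hform : ∀ i : ℕ, psum s (a + i) = psum s a + (if s a then (i : ℤ) else -(i : ℤ)) := by
    intro i
    induction i with
    | zero => simp
    | succ i ih =>
      have : a + (i + 1) = (a + i) + 1 := by omega
      rw [this, psum_succ, ih, hconst (a + i) (by omega)]
      split <;> push_cast <;> ring
  obtain ⟨b1, hb1, hab1⟩ := hinf.exists_gt a
  obtain ⟨b2, hb2, hab2⟩ := hinf.exists_gt b1
  have e1 := hform (b1 - a)
  have e2 := hform (b2 - a)
  rw [show a + (b1 - a) = b1 by omega] at e1
  rw [show a + (b2 - a) = b2 by omega] at e2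
  simp only [Set.mem_setOf_eq] at hb1 hb2
  rw [hb1] at e1
  rw [hb2] at e2
  split at e1 <;> split at e2 <;> omega

open Classical in
noncomputable def theJ (a : ℕ) (s : SPStream) : ℕ :=
  if h : ∃ j, a ≤ j ∧ s j ≠ s (j + 1) then Nat.find h else 0

open Classical in
noncomputable def Psi (k : ℤ) (a : ℕ) (s : SPStream) : ℕ :=
  if h : ∃ b, a < b ∧ psum s b = k then Nat.find h else 0

section spec
variable {s : SPStream} {k : ℤ} {a : ℕ}

open Classical in
lemma theJ_spec (hinf : {n | psum s n = k}.Infinite) :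
    a ≤ theJ a s ∧ s (theJ a s) ≠ s (theJ a s + 1) ∧
      (∀ i, a ≤ i → i < theJ a s → s i = s (i + 1)) := by
  have h := exists_diff (a := a) hinf
  rw [theJ, dif_pos h]
  refine ⟨(Nat.find_spec h).1, (Nat.find_spec h).2, fun i hi hlt => ?_⟩
  have := Nat.find_min h hlt
  push_neg at this
  exact this hi
end spec

lemma inv_del {s : SPStream} {k : ℤ} {a : ℕ} {j : ℕ} (hja : a ≤ j)
    (hne : s j ≠ s (j + 1))
    (hka : psum s a = k) (hinf : {n | psum s n = k}.Infinite) :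
    psum (del j s) a = k ∧ {n | psum (del j s) n = k}.Infinite := by
  constructor
  · rw [psum_del hne, if_pos hja, hka]
  · have hsub : (fun b => b - 2) '' ({n | psum s n = k} \ {n | n < j + 2}) ⊆
        {n | psum (del j s) n = k} := by
      rintro m ⟨b, ⟨hbk, hbge⟩, rfl⟩
      simp only [Set.mem_setOf_eq, not_lt] at hbk hbge ⊢
      rw [psum_del hne]
      rcases Nat.lt_or_ge j (b - 2) with h | h
      · rw [if_neg (by omega), show b - 2 + 2 = b by omega]; exact hbk
      · have hb2 : b = j + 2 := by omega
        rw [if_pos (by omega), show b - 2 = j by omega]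
        rw [← psum_cancel hne, ← hb2]; exact hbk
    have hinf2 : ({n | psum s n = k} \ {n | n < j + 2}).Infinite :=
      hinf.diff (Set.finite_lt_nat (j + 2))
    have hinj : Set.InjOn (fun b => b - 2) ({n | psum s n = k} \ {n | n < j + 2}) := by
      intro x hx y hy hxy
      simp only [Set.mem_diff, Set.mem_setOf_eq, not_lt] at hx hy
      dsimp only at hxy
      omega
    exact (hinf2.image hinj).mono hsub

lemma psi_dec {s : SPStream} {k : ℤ} {a : ℕ}
    (hka : psum s a = k) (hinf : {n | psum s n = k}.Infinite) :
    theJ a s = a ∨ Psi k a (del (theJ a s) s) < Psi k a s := by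
  obtain ⟨hja, hne, hmin⟩ := theJ_spec (a := a) hinf
  set j := theJ a s with hj
  rcases Nat.eq_or_lt_of_le hja with he | hlt
  · exact Or.inl he.symm
  right
  -- run of constant letters on [a, j]
  have hrun : ∀ i, a ≤ i → i ≤ j → s i = s a := by
    intro i hi hij
    induction i with
    | zero => rw [Nat.le_zero.mp hi]
    | succ i ih =>
      rcases Nat.lt_or_ge a (i+1) with h | h
      · rw [← hmin i (by omega) (by omega), ih (by omega) (by omega)]
      · rw [Nat.le_antisymm hi h]
  have hform : ∀ i : ℕ, a + i ≤ j + 1 →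
      psum s (a + i) = psum s a + (if s a then (i : ℤ) else -(i : ℤ)) := by
    intro i hij
    induction i with
    | zero => simp
    | succ i ih =>
      have : a + (i + 1) = (a + i) + 1 := by omega
      rw [this, psum_succ, ih (by omega), hrun (a + i) (by omega) (by omega)]
      split <;> push_cast <;> ring
  have hne_k : ∀ m, a < m → m ≤ j + 1 → psum s m ≠ k := by
    intro m hm hmj
    have := hform (m - a) (by omega)
    rw [show a + (m - a) = m by omega] at this
    rw [this, hka]
    split <;> [skip; skip] <;> intro hcontra <;> omega
  -- the minimal occurrence
  have hb : ∃ b, a < b ∧ psum s b = k := by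
    obtain ⟨b, hbk, hab⟩ := hinf.exists_gt a
    exact ⟨b, hab, hbk⟩
  have hPsi : Psi k a s = Nat.find hb := by rw [Psi, dif_pos hb]
  have hbspec := Nat.find_spec hb
  set b := Nat.find hb with hbdef
  have hbge : j + 3 ≤ b := by
    rcases Nat.lt_or_ge (j + 1) b with h | h
    · rcases Nat.eq_or_lt_of_le h with he | hlt2
      · exfalso
        have hb2 : b = j + 2 := by omega
        have hpb : psum s b = psum s j := by rw [hb2]; exact psum_cancel hne
        exact hne_k j hlt (by omega) (by rw [← hpb]; exact hbspec.2)
      · omega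
    · exact absurd hbspec.2 (hne_k b hbspec.1 h)
  -- b - 2 is an occurrence for del j s
  have hb' : ∃ b', a < b' ∧ psum (del j s) b' = k := by
    refine ⟨b - 2, by omega, ?_⟩
    rw [psum_del hne, if_neg (by omega), show b - 2 + 2 = b by omega]
    exact hbspec.2
  have hPsi' : Psi k a (del j s) = Nat.find hb' := by rw [Psi, dif_pos hb']
  rw [hPsi, hPsi']
  have hfind : Nat.find hb' ≤ b - 2 := Nat.find_le ⟨by omega, by
    rw [psum_del hne, if_neg (by omega), show b - 2 + 2 = b by omega]; exact hbspec.2⟩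
  omega

open Filter in
lemma inf_to_not_snInf {t : SPStream} {k : ℤ} (hk : {n | psum t n = k}.Infinite) :
    ¬ (∀ (ts : ℕ → SPStream) (d : ℕ → ℕ), ts 0 = t →
        (∀ n, stepAt (d n) (ts n) (ts (n + 1))) →
        Tendsto d atTop atTop) := by
  obtain ⟨a, ha⟩ := hk.nonempty
  simp only [Set.mem_setOf_eq] at ha
  intro hsn
  set ts : ℕ → SPStream := fun n => Nat.rec t (fun _ s => del (theJ a s) s) n with hts
  have htssucc : ∀ n, ts (n + 1) = del (theJ a (ts n)) (ts n) := fun n => rfl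
  have hinv : ∀ n, psum (ts n) a = k ∧ {m | psum (ts n) m = k}.Infinite := by
    intro n
    induction n with
    | zero => exact ⟨ha, hk⟩
    | succ n ih =>
      obtain ⟨hja, hne, _⟩ := theJ_spec (a := a) ih.2
      rw [htssucc n]
      exact inv_del hja hne ih.1 ih.2
  have hstep : ∀ n, stepAt (theJ a (ts n)) (ts n) (ts (n + 1)) := by
    intro n
    obtain ⟨_, hne, _⟩ := theJ_spec (a := a) (hinv n).2
    rw [htssucc n]
    exact stepAt_del hne
  have htd := hsn ts (fun n => theJ a (ts n)) rfl hstep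
  rw [tendsto_atTop_atTop] at htd
  obtain ⟨N, hN⟩ := htd (a + 1)
  have hdec : ∀ n, N ≤ n → Psi k a (ts (n + 1)) < Psi k a (ts n) := by
    intro n hn
    rcases psi_dec (hinv n).1 (hinv n).2 with h | h
    · exfalso; have := hN n hn; omega
    · rw [htssucc n]; exact h
  have key : ∀ i, Psi k a (ts (N + i)) + i ≤ Psi k a (ts N) := by
    intro i
    induction i with
    | zero => simp
    | succ i ih =>
      have := hdec (N + i) (by omega)
      have he : N + (i + 1) = (N + i) + 1 := by omega
      rw [he]
      omega
  have := key (Psi k a (ts N) + 1)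
  omega

open Filter in
lemma fin_to_tendsto {t : SPStream} (hfin : ∀ k : ℤ, {n : ℕ | psum t n = k}.Finite) :
    Tendsto (psum t) atTop atTop ∨ Tendsto (psum t) atTop atBot := by
  -- |psum| exceeds any bound eventually
  have habs : ∀ B : ℕ, ∃ N, ∀ n, N ≤ n → B ≤ (psum t n).natAbs := by
    intro B
    have hBad : {n | (psum t n).natAbs < B}.Finite := by
      have hsub : {n | (psum t n).natAbs < B} ⊆
          ⋃ k ∈ Finset.Icc (-(B:ℤ)) (B:ℤ), {n : ℕ | psum t n = k} := by
        intro j hj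
        simp only [Set.mem_setOf_eq] at hj
        simp only [Set.mem_iUnion, Set.mem_setOf_eq, Finset.mem_Icc]
        exact ⟨psum t j, ⟨by omega, by omega⟩, rfl⟩
      exact Set.Finite.subset (Set.Finite.biUnion (Finset.finite_toSet _) (fun k _ => hfin k)) hsub
    obtain ⟨N, hN⟩ := hBad.bddAbove
    refine ⟨N + 1, fun n hn => ?_⟩
    by_contra hcon
    have : n ≤ N := hN (by simp only [Set.mem_setOf_eq]; omega)
    omega
  obtain ⟨N, hNspec⟩ := habs 1
  have hsign : ∀ m, (1 ≤ psum t N → 1 ≤ psum t (N + m)) ∧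
      (psum t N ≤ -1 → psum t (N + m) ≤ -1) := by
    intro m
    induction m with
    | zero => exact ⟨fun h => h, fun h => h⟩
    | succ m ih =>
      have hnz := hNspec (N + m + 1) (by omega)
      rw [psum_succ] at hnz
      have he : N + (m + 1) = (N + m) + 1 := by omega
      rw [he, psum_succ]
      rcases Bool.eq_false_or_eq_true (t (N + m)) with hb | hb <;>
        simp [hb] at hnz ⊢ <;>
        exact ⟨fun h => by have := ih.1 h; omega, fun h => by have := ih.2 h; omega⟩
  have hNnz := hNspec N (le_refl N)
  rcases Int.lt_or_lt_of_ne (show psum t N ≠ 0 by omega) with hneg | hpos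
  · right
    rw [tendsto_atTop_atBot]
    intro b
    rcases Int.le_total 0 b with hb | hb
    · exact ⟨N, fun n hn => by have := (hsign (n - N)).2 (by omega); rw [show N + (n - N) = n by omega] at this; omega⟩
    · obtain ⟨M, hM⟩ := habs b.natAbs
      refine ⟨max N M, fun n hn => ?_⟩
      have h1 := (hsign (n - N)).2 (by omega)
      rw [show N + (n - N) = n by omega] at h1
      have h2 := hM n (le_trans (le_max_right N M) hn)
      omega
  · left
    rw [tendsto_atTop_atTop]
    intro b
    rcases Int.le_total b 0 with hb | hb
    · exact ⟨N, fun n hn => by have := (hsign (n - N)).1 (by omega); rw [show N + (n - N) = n by omega] at this; omega⟩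
    · obtain ⟨M, hM⟩ := habs b.natAbs
      refine ⟨max N M, fun n hn => ?_⟩
      have h1 := (hsign (n - N)).1 (by omega)
      rw [show N + (n - N) = n by omega] at h1
      have h2 := hM n (le_trans (le_max_right N M) hn)
      omega

open Filter in
lemma tendsto_to_fin {t : SPStream}
    (h : Tendsto (psum t) atTop atTop ∨ Tendsto (psum t) atTop atBot) :
    ∀ k : ℤ, {n : ℕ | psum t n = k}.Finite := by
  intro k
  rcases h with h | h
  · rw [tendsto_atTop_atTop] at h
    obtain ⟨N, hN⟩ := h (k + 1)
    refine Set.Finite.subset (Set.finite_lt_nat N) (fun n hn => ?_)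
    simp only [Set.mem_setOf_eq] at hn ⊢
    by_contra hc
    have := hN n (by omega)
    omega
  · rw [tendsto_atTop_atBot] at h
    obtain ⟨N, hN⟩ := h (k - 1)
    refine Set.Finite.subset (Set.finite_lt_nat N) (fun n hn => ?_)
    simp only [Set.mem_setOf_eq] at hn ⊢
    by_contra hc
    have := hN n (by omega)
    omega

open Filter in
/-- `t` is infinitarily strongly normalizing: along every infinite rewrite
sequence starting from `t` the depths of the contracted redexes tend to
infinity (each depth is eventually never rewritten). -/
def snInf (t : SPStream) : Prop :=
  ∀ (ts : ℕ → SPStream) (d : ℕ → ℕ), ts 0 = t →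
    (∀ n, stepAt (d n) (ts n) (ts (n + 1))) →
    Tendsto d atTop atTop

open Filter in
/-- `t` is SN∞ iff each value `k ∈ ℤ` occurs only finitely often
among the partial sums `sum(t,n)`; equivalently, iff `lim_{n→∞} sum(t,n)`
exists in `{+∞, −∞}`. -/
theorem statement8 (t : SPStream) :
    (snInf t ↔ ∀ k : ℤ, {n : ℕ | psum t n = k}.Finite) ∧
    ((∀ k : ℤ, {n : ℕ | psum t n = k}.Finite) ↔
      (Tendsto (psum t) atTop atTop ∨ Tendsto (psum t) atTop atBot)) := by
  refine ⟨⟨?_, fun hfin => fin_to_snInf hfin⟩,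
    fun hfin => fin_to_tendsto hfin, fun h => tendsto_to_fin h⟩
  intro hsn k
  by_contra hk
  exact inf_to_not_snInf hk hsn
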